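/- Fix H ∈ (0,1) and ω₀ ∈ ℝ, and define the dispersion function 𝔡(k) = 1/(k·(coth(k(1−H)) + coth(kH))) − (1/2)ω₀H for k > 0. Then 𝔡 is strictly decreasing on (0,∞). Consequently, for every q ∈ ℝ and every k > 0 there is at most one positive integer n with q = 𝔡(nk). -/

import Mathlib

open Real

/-- The hyperbolic cotangent `coth x = cosh x / sinh x`. -/
noncomputable def coth (x : ℝ) : ℝ := Real.cosh x / Real.sinh x

/-- The dispersion function `𝔡` of the two-layer constant-vorticity problem. -/
noncomputable def dispersion (H ω₀ k : ℝ) : ℝ :=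
  1 / (k * (coth (k * (1 - H)) + coth (k * H))) - (1 / 2) * ω₀ * H

/-!
Writing `a = 1 - H` and `b = H`, the denominator of `𝔡` is `g (k a) / a + g (k b) / b` with
`g x = x coth x`. Since `g' x = (sinh x cosh x - x) / sinh² x` and `sinh x cosh x = sinh (2x) / 2 > x`
for `x > 0`, `g` is strictly increasing and positive on `(0,∞)`, so the denominator is too and
`𝔡` is strictly decreasing. Injectivity of `𝔡` then separates the points `n k`.
-/

lemma coth_pos {x : ℝ} (hx : 0 < x) : 0 < coth x :=
  div_pos (cosh_pos x) (sinh_pos_iff.2 hx)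

lemma self_lt_sinh_mul_cosh {x : ℝ} (hx : 0 < x) : x < sinh x * cosh x := by
  have h := self_lt_sinh_iff.2 (by linarith : 0 < 2 * x)
  rw [sinh_two_mul] at h
  linarith

lemma hasDerivAt_mul_coth {x : ℝ} (hx : x ≠ 0) :
    HasDerivAt (fun y => y * coth y) ((sinh x * cosh x - x) / sinh x ^ 2) x := by
  have hs : sinh x ≠ 0 := sinh_ne_zero.2 hx
  have h : HasDerivAt (fun y => y * cosh y / sinh y)
      (((1 * cosh x + x * sinh x) * sinh x - x * cosh x * cosh x) / sinh x ^ 2) x :=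
    ((hasDerivAt_id' x).mul (hasDerivAt_cosh x)).div (hasDerivAt_sinh x) hs
  have hfun : (fun y => y * coth y) = fun y => y * cosh y / sinh y :=
    funext fun y => (mul_div_assoc y (cosh y) (sinh y)).symm
  rw [hfun]
  convert h using 2
  linear_combination x * cosh_sq_sub_sinh_sq x

lemma strictMonoOn_mul_coth : StrictMonoOn (fun x => x * coth x) (Set.Ioi 0) := by
  apply strictMonoOn_of_deriv_pos (convex_Ioi 0)
  · intro x hx
    exact (hasDerivAt_mul_coth (ne_of_gt hx)).continuousAt.continuousWithinAt
  · intro x hx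
    rw [interior_Ioi] at hx
    rw [(hasDerivAt_mul_coth (ne_of_gt hx)).deriv]
    exact div_pos (sub_pos.2 (self_lt_sinh_mul_cosh hx)) (pow_pos (sinh_pos_iff.2 hx) 2)

lemma strictMonoOn_mul_coth_mul {a : ℝ} (ha : 0 < a) :
    StrictMonoOn (fun k => k * coth (k * a)) (Set.Ioi 0) := by
  intro x hx y hy hxy
  have hxa : x * a ∈ Set.Ioi 0 := mul_pos hx ha
  have hya : y * a ∈ Set.Ioi 0 := mul_pos hy ha
  have h := strictMonoOn_mul_coth hxa hya (mul_lt_mul_of_pos_right hxy ha)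
  calc x * coth (x * a) = x * a * coth (x * a) / a := by field_simp
    _ < y * a * coth (y * a) / a := div_lt_div_of_pos_right h ha
    _ = y * coth (y * a) := by field_simp

lemma StrictMonoOn.one_div_strictAntiOn {f : ℝ → ℝ} {s : Set ℝ} (hf : StrictMonoOn f s)
    (hpos : ∀ x ∈ s, 0 < f x) : StrictAntiOn (fun x => 1 / f x) s :=
  fun _ hx _ hy hxy => one_div_lt_one_div_of_lt (hpos _ hx) (hf hx hy hxy)

lemma dispersion_strictAntiOn {H : ℝ} (ω₀ : ℝ) (hH : H ∈ Set.Ioo (0 : ℝ) 1) :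
    StrictAntiOn (dispersion H ω₀) (Set.Ioi 0) := by
  obtain ⟨hH0, hH1⟩ := hH
  have hH1' : 0 < 1 - H := sub_pos.2 hH1
  have hmono : StrictMonoOn (fun k => k * (coth (k * (1 - H)) + coth (k * H))) (Set.Ioi 0) := by
    intro x hx y hy hxy
    simp only [mul_add]
    exact add_lt_add (strictMonoOn_mul_coth_mul hH1' hx hy hxy)
      (strictMonoOn_mul_coth_mul hH0 hx hy hxy)
  have hpos : ∀ k ∈ Set.Ioi (0 : ℝ), 0 < k * (coth (k * (1 - H)) + coth (k * H)) :=
    fun k hk => mul_pos hk (add_pos (coth_pos (mul_pos hk hH1')) (coth_pos (mul_pos hk hH0)))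
  intro x hx y hy hxy
  simpa [dispersion] using hmono.one_div_strictAntiOn hpos hx hy hxy

/-- The dispersion function is strictly decreasing on `(0,∞)`; consequently, for
every `q` and every `k > 0` there is at most one positive integer `n` with
`q = 𝔡(n k)`. -/
theorem dispersion_strictAnti
    (H ω₀ : ℝ) (hH : H ∈ Set.Ioo (0 : ℝ) 1) :
    StrictAntiOn (dispersion H ω₀) (Set.Ioi 0)
    ∧ ∀ (q k : ℝ), 0 < k → ∀ m n : ℕ, 0 < m → 0 < n →
        q = dispersion H ω₀ ((m : ℝ) * k) → q = dispersion H ω₀ ((n : ℝ) * k) →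
        m = n := by
  have hanti := dispersion_strictAntiOn ω₀ hH
  refine ⟨hanti, fun q k hk m n hm hn hqm hqn => ?_⟩
  have hmk : (m : ℝ) * k ∈ Set.Ioi 0 := mul_pos (Nat.cast_pos.2 hm) hk
  have hnk : (n : ℝ) * k ∈ Set.Ioi 0 := mul_pos (Nat.cast_pos.2 hn) hk
  have hmn : (m : ℝ) * k = n * k := hanti.injOn hmk hnk (hqm.symm.trans hqn)
  exact_mod_cast mul_right_cancel₀ hk.ne' hmn
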